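/- arXiv:math/9811130 — 2 statements merged into one kernel-verified Lean document; each statement's English description precedes it below -/
import Mathlib

section
/- Let K̃ be a compact simply connected Lie group, c an element of its center, and K = K̃/⟨c⟩. If (x,y) and (x',y') are c-pairs in K̃ (i.e., [x,y] = c = [x',y']) whose images in K define the same homomorphisms up to conjugation from Z² to K, then (x,y) and (x',y') are conjugate in K̃. More precisely, if (x,y) is conjugate to (c^a x', c^b y') for some integers a,b, then (x,y) is conjugate to (x',y'). -/
/-!
Conjugation by `y'` multiplies `x'` by `c⁻¹` and conjugation by `x'` multiplies `y'` by `c`, and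
both fix the central element `c`. Hence conjugation by `x'^(-b) * y'^a` carries
`(c^a x', c^b y')` back to `(x', y')`. Two pairs with the same image in `G ⧸ ⟨c⟩` differ by such
powers of `c`, so conjugacy there lifts to conjugacy in `G`.
-/

open MulAut

section

variable {G : Type*} [Group G] {c : G}

namespace MulAut

theorem zpow_apply_eq_zpow_mul {x : G} (φ : MulAut G) (hc : φ c = c) (hx : φ x = c * x)
    (n : ℤ) : (φ ^ n) x = c ^ n * x := by
  have hc_inv : φ⁻¹ c = c := by rw [inv_apply, MulEquiv.symm_apply_eq, hc]
  have hx_inv : φ⁻¹ x = c⁻¹ * x := by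
    rw [inv_apply, MulEquiv.symm_apply_eq, map_mul, map_inv, hc, hx, inv_mul_cancel_left]
  induction n using Int.induction_on with
  | zero => simp
  | succ k ih =>
    rw [zpow_add_one, ← (Commute.self_zpow φ k).eq, mul_apply, ih, map_mul, map_zpow, hc, hx,
      ← mul_assoc, ← zpow_add_one]
  | pred k ih =>
    rw [zpow_sub_one, ← (Commute.self_zpow φ _).inv_left.eq, mul_apply, ih, map_mul, map_zpow,
      hc_inv, hx_inv, ← mul_assoc, ← zpow_sub_one]

theorem conj_apply_of_mem_center (hc : c ∈ Subgroup.center G) (g : G) : conj g c = c := by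
  rw [conj_apply, Subgroup.mem_center_iff.mp hc g, mul_inv_cancel_right]

theorem conj_apply_zpow_mul_of_mem_center (hc : c ∈ Subgroup.center G) (g z : G) (n : ℤ) :
    conj g (c ^ n * z) = c ^ n * conj g z := by
  rw [map_mul, map_zpow, conj_apply_of_mem_center hc]

theorem conj_zpow_apply_self (g : G) (n : ℤ) : conj (g ^ n) g = g := by
  rw [conj_apply, (Commute.zpow_self g n).eq, mul_inv_cancel_right]

theorem conj_zpow_apply_eq_zpow_mul {x y : G} (hc : c ∈ Subgroup.center G)
    (h : conj y x = c * x) (n : ℤ) : conj (y ^ n) x = c ^ n * x := by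
  rw [map_zpow]
  exact zpow_apply_eq_zpow_mul _ (conj_apply_of_mem_center hc y) h n

end MulAut

section CommutatorEq

variable {x y : G} (h : x * y * x⁻¹ * y⁻¹ = c)
include h

theorem conj_apply_right_of_commutator_eq : conj x y = c * y := by
  rw [conj_apply, ← h]; group

theorem conj_apply_left_of_commutator_eq : conj y x = c⁻¹ * x := by
  rw [conj_apply, ← h]; group

theorem conj_apply_zpow_mul_of_commutator_eq (hc : c ∈ Subgroup.center G) (a b : ℤ) :
    conj (x ^ (-b) * y ^ a) (c ^ a * x) = x ∧ conj (x ^ (-b) * y ^ a) (c ^ b * y) = y := by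
  have hx : conj (y ^ a) x = c ^ (-a) * x := by
    rw [conj_zpow_apply_eq_zpow_mul (Subgroup.inv_mem _ hc)
      (conj_apply_left_of_commutator_eq h), inv_zpow, zpow_neg]
  have hy : conj (x ^ (-b)) y = c ^ (-b) * y :=
    conj_zpow_apply_eq_zpow_mul hc (conj_apply_right_of_commutator_eq h) _
  constructor
  · rw [conj_apply_zpow_mul_of_mem_center hc, map_mul conj, mul_apply, hx,
      conj_apply_zpow_mul_of_mem_center hc, conj_zpow_apply_self, zpow_neg, mul_inv_cancel_left]
  · rw [conj_apply_zpow_mul_of_mem_center hc, map_mul conj, mul_apply, conj_zpow_apply_self, hy,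
      zpow_neg, mul_inv_cancel_left]

theorem exists_conj_eq_of_conj_eq_zpow_mul (hc : c ∈ Subgroup.center G) {u v : G} (a b : ℤ)
    (huv : ∃ g : G, g * u * g⁻¹ = c ^ a * x ∧ g * v * g⁻¹ = c ^ b * y) :
    ∃ g : G, g * u * g⁻¹ = x ∧ g * v * g⁻¹ = y := by
  obtain ⟨g, hu, hv⟩ := huv
  obtain ⟨hx, hy⟩ := conj_apply_zpow_mul_of_commutator_eq h hc a b
  refine ⟨x ^ (-b) * y ^ a * g, ?_, ?_⟩
  · rw [← conj_apply, map_mul conj, mul_apply, conj_apply g, hu, hx]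
  · rw [← conj_apply, map_mul conj, mul_apply, conj_apply g, hv, hy]

end CommutatorEq

theorem exists_eq_zpow_mul_of_mk_eq (hc : c ∈ Subgroup.center G) {u v : G}
    (h : (u : G ⧸ Subgroup.zpowers c) = v) : ∃ n : ℤ, u = c ^ n * v := by
  obtain ⟨k, hk⟩ := Subgroup.mem_zpowers_iff.mp (QuotientGroup.eq.mp h)
  refine ⟨-k, ?_⟩
  rw [← Subgroup.mem_center_iff.mp (Subgroup.zpow_mem _ hc _) v, zpow_neg, hk, mul_inv_rev,
    inv_inv, mul_inv_cancel_left]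

end

theorem cPair_conjugacy_general
    {G : Type*} [Group G] (c : G) (hc : c ∈ Subgroup.center G)
    (x y x' y' : G) (hxy' : x' * y' * x'⁻¹ * y'⁻¹ = c) :
    ((∃ g : G, QuotientGroup.mk (s := Subgroup.zpowers c) (g * x * g⁻¹) =
          (QuotientGroup.mk x' : G ⧸ Subgroup.zpowers c) ∧
        QuotientGroup.mk (s := Subgroup.zpowers c) (g * y * g⁻¹) =
          (QuotientGroup.mk y' : G ⧸ Subgroup.zpowers c)) →
      ∃ g : G, g * x * g⁻¹ = x' ∧ g * y * g⁻¹ = y') ∧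
    ∀ a b : ℤ, (∃ g : G, g * x * g⁻¹ = c ^ a * x' ∧ g * y * g⁻¹ = c ^ b * y') →
      ∃ g : G, g * x * g⁻¹ = x' ∧ g * y * g⁻¹ = y' := by
  refine ⟨fun ⟨g, hgx, hgy⟩ => ?_, fun a b => exists_conj_eq_of_conj_eq_zpow_mul hxy' hc a b⟩
  obtain ⟨a, ha⟩ := exists_eq_zpow_mul_of_mk_eq hc hgx
  obtain ⟨b, hb⟩ := exists_eq_zpow_mul_of_mk_eq hc hgy
  exact exists_conj_eq_of_conj_eq_zpow_mul hxy' hc a b ⟨g, ha, hb⟩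

/-- Let `K̃` be a (compact simply connected) group, `c` central, and `K = K̃/⟨c⟩`.  If two
`c`-pairs `(x,y)` and `(x',y')` in `K̃` have images in `K` that are simultaneously
conjugate, then `(x,y)` and `(x',y')` are conjugate in `K̃`.  More precisely, if `(x,y)`
is conjugate to `(c^a x', c^b y')` for some integers `a, b`, then `(x,y)` is conjugate to
`(x',y')`. -/
theorem cPair_conjugacy
    {G : Type*} [Group G] (c : G) (hc : c ∈ Subgroup.center G)
    (x y x' y' : G) (hxy : x * y * x⁻¹ * y⁻¹ = c) (hxy' : x' * y' * x'⁻¹ * y'⁻¹ = c) :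
    ((∃ g : G, QuotientGroup.mk (s := Subgroup.zpowers c) (g * x * g⁻¹) =
          (QuotientGroup.mk x' : G ⧸ Subgroup.zpowers c) ∧
        QuotientGroup.mk (s := Subgroup.zpowers c) (g * y * g⁻¹) =
          (QuotientGroup.mk y' : G ⧸ Subgroup.zpowers c)) →
      ∃ g : G, g * x * g⁻¹ = x' ∧ g * y * g⁻¹ = y') ∧
    ∀ a b : ℤ, (∃ g : G, g * x * g⁻¹ = c ^ a * x' ∧ g * y * g⁻¹ = c ^ b * y') →
      ∃ g : G, g * x * g⁻¹ = x' ∧ g * y * g⁻¹ = y' :=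
  cPair_conjugacy_general c hc x y x' y' hxy'
end

section
/- Let K̃ be a compact simply connected Lie group, c a central element, K = K̃/⟨c⟩, and (x,y) a c-pair in K̃ with images x̄, ȳ ∈ K defining ρ : Z² → K. Then there is an exact sequence 1 → ⟨c⟩ → Z_{K̃}(x,y) → Z_K(ρ) → ⟨c⟩ × ⟨c⟩ → 1, where the last map sends ḡ ∈ Z_K(ρ) to ([g,x],[g,y]) for any lift g of ḡ to K̃. -/
open scoped commutatorElement

/-!
Commutators with a central value behave bilinearly: `⁅u * v, w⁆ = ⁅v, w⁆ * ⁅u, w⁆` whenever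
`⁅v, w⁆` is central, and `⁅a ^ n, b⁆ = ⁅a, b⁆ ^ n` whenever `⁅a, b⁆` is. So changing a lift by an
element of `⟨c⟩` leaves `(⁅g, x⁆, ⁅g, y⁆)` unchanged, which gives exactness at `Z_K(ρ)`, and
`g = x ^ b * y ^ (-a)` has `(⁅g, x⁆, ⁅g, y⁆) = (c ^ a, c ^ b)`.
-/

namespace Subgroup

variable {G : Type*} [Group G]

theorem commutatorElement_mul_left_of_mem_center {u v w : G} (h : ⁅v, w⁆ ∈ center G) :
    ⁅u * v, w⁆ = ⁅v, w⁆ * ⁅u, w⁆ := by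
  rw [commutatorElement_mul_left_eq_conj_mul, mem_center_iff.mp h u, mul_inv_cancel_right]

theorem commutatorElement_mul_left_of_commute {u v w : G} (h : Commute v w) :
    ⁅u * v, w⁆ = ⁅u, w⁆ := by
  have h1 : ⁅v, w⁆ = 1 := commutatorElement_eq_one_iff_commute.mpr h
  rw [commutatorElement_mul_left_of_mem_center (h1 ▸ one_mem _), h1, one_mul]

theorem commutatorElement_zpow_right_of_mem_center {a b : G} (h : ⁅a, b⁆ ∈ center G) (n : ℤ) :
    ⁅a, b ^ n⁆ = ⁅a, b⁆ ^ n := by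
  have hconj : a * b * a⁻¹ = ⁅a, b⁆ * b := by rw [commutatorElement_def]; group
  have hcomm : Commute ⁅a, b⁆ b := (mem_center_iff.mp h b).symm
  calc ⁅a, b ^ n⁆ = (a * b * a⁻¹) ^ n * (b ^ n)⁻¹ := by rw [conj_zpow, commutatorElement_def]
    _ = ⁅a, b⁆ ^ n := by rw [hconj, hcomm.mul_zpow, mul_inv_cancel_right]

theorem commutatorElement_zpow_left_of_mem_center {a b : G} (h : ⁅a, b⁆ ∈ center G) (n : ℤ) :
    ⁅a ^ n, b⁆ = ⁅a, b⁆ ^ n := by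
  have h' : ⁅b, a⁆ ∈ center G := commutatorElement_inv a b ▸ inv_mem h
  rw [← commutatorElement_inv, commutatorElement_zpow_right_of_mem_center h', ←
    commutatorElement_inv, inv_zpow, inv_inv]

theorem mem_centralizer_pair_iff {g x y : G} :
    g ∈ centralizer {x, y} ↔ ⁅g, x⁆ = 1 ∧ ⁅g, y⁆ = 1 := by
  simp only [mem_centralizer_iff, Set.mem_insert_iff, Set.mem_singleton_iff, forall_eq_or_imp,
    forall_eq, commutatorElement_eq_one_iff_mul_comm]
  exact and_congr eq_comm eq_comm

theorem commutatorElement_zpow_mul_zpow_left {x y : G} (h : ⁅x, y⁆ ∈ center G) (a b : ℤ) :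
    ⁅x ^ b * y ^ (-a), x⁆ = ⁅x, y⁆ ^ a := by
  have hyx : ⁅y, x⁆ ∈ center G := commutatorElement_inv x y ▸ inv_mem h
  have hxx : ⁅x ^ b, x⁆ = 1 := commutatorElement_eq_one_iff_commute.mpr (Commute.zpow_self x b)
  rw [commutatorElement_mul_left_of_mem_center (by
      rw [commutatorElement_zpow_left_of_mem_center hyx]; exact zpow_mem hyx _),
    commutatorElement_zpow_left_of_mem_center hyx, hxx, mul_one, ← commutatorElement_inv,
    inv_zpow', neg_neg]

theorem commutatorElement_zpow_mul_zpow_right {x y : G} (h : ⁅x, y⁆ ∈ center G) (a b : ℤ) :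
    ⁅x ^ b * y ^ (-a), y⁆ = ⁅x, y⁆ ^ b := by
  rw [commutatorElement_mul_left_of_commute (Commute.zpow_self y (-a)),
    commutatorElement_zpow_left_of_mem_center h]

end Subgroup

open Subgroup

/-- Let `K̃` be a group, `c` central, `K = K̃/⟨c⟩`, and `(x,y)` a `c`-pair.  Writing
"`g` represents an element of `Z_K(ρ)`" as `⁅g,x⁆ ∈ ⟨c⟩ ∧ ⁅g,y⁆ ∈ ⟨c⟩`, there is an
exact sequence `1 → ⟨c⟩ → Z_{K̃}(x,y) → Z_K(ρ) → ⟨c⟩ × ⟨c⟩ → 1`, where the last map sends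
`ḡ` to `(⁅g,x⁆, ⁅g,y⁆)` for any lift `g` of `ḡ`. -/
theorem cPair_centralizer_exact_sequence
    {G : Type*} [Group G] (c : G) (hc : c ∈ Subgroup.center G)
    (x y : G) (hxy : ⁅x, y⁆ = c) :
    -- `⟨c⟩` is contained in `Z_{K̃}(x,y)`, and is the kernel of the projection to `K`
    Subgroup.zpowers c ≤ Subgroup.centralizer {x, y} ∧
    -- the commutators `⁅g,x⁆`, `⁅g,y⁆` are unchanged under modifying `g` by `⟨c⟩`,
    -- so the last map is well defined independently of the choice of lift
    (∀ g n : G, n ∈ Subgroup.zpowers c → ⁅g * n, x⁆ = ⁅g, x⁆ ∧ ⁅g * n, y⁆ = ⁅g, y⁆) ∧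
    -- exactness at `Z_K(ρ)`: an element of `Z_K(ρ)` has trivial image in `⟨c⟩ × ⟨c⟩`
    -- if and only if it lifts to an element of `Z_{K̃}(x,y)`
    (∀ g : G, ⁅g, x⁆ ∈ Subgroup.zpowers c → ⁅g, y⁆ ∈ Subgroup.zpowers c →
      ((⁅g, x⁆ = 1 ∧ ⁅g, y⁆ = 1) ↔
        ∃ g' ∈ Subgroup.centralizer {x, y}, g'⁻¹ * g ∈ Subgroup.zpowers c)) ∧
    -- the last map is surjective onto `⟨c⟩ × ⟨c⟩`
    (∀ a b : ℤ, ∃ g : G, ⁅g, x⁆ = c ^ a ∧ ⁅g, y⁆ = c ^ b) := by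
  have hcyc : zpowers c ≤ centralizer {x, y} :=
    (zpowers_le.mpr hc).trans (center_le_centralizer _)
  have hlift : ∀ g n : G, n ∈ zpowers c → ⁅g * n, x⁆ = ⁅g, x⁆ ∧ ⁅g * n, y⁆ = ⁅g, y⁆ := by
    intro g n hn
    obtain ⟨hnx, hny⟩ := mem_centralizer_pair_iff.mp (hcyc hn)
    exact ⟨commutatorElement_mul_left_of_commute (commutatorElement_eq_one_iff_commute.mp hnx),
      commutatorElement_mul_left_of_commute (commutatorElement_eq_one_iff_commute.mp hny)⟩
  refine ⟨hcyc, hlift, fun g _ _ => ⟨?_, ?_⟩, fun a b => ⟨x ^ b * y ^ (-a), ?_, ?_⟩⟩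
  · exact fun hg => ⟨g, mem_centralizer_pair_iff.mpr hg, by simp [one_mem]⟩
  · rintro ⟨g', hg', hn⟩
    rw [← mul_inv_cancel_left g' g, (hlift g' _ hn).1, (hlift g' _ hn).2]
    exact mem_centralizer_pair_iff.mp hg'
  · rw [commutatorElement_zpow_mul_zpow_left (hxy ▸ hc), hxy]
  · rw [commutatorElement_zpow_mul_zpow_right (hxy ▸ hc), hxy]
end
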